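/- Let m > 2 be odd and let G = D_{2m} be the dihedral group of order 2m (Mathlib's DihedralGroup m). Then the characteristic polynomial of the adjacency matrix of the commuting graph Γ_G (over the reals) equals (X + 1)^(m − 2) · X^m · (X − (m − 2)); in particular G is commuting integral. -/

import Mathlib

open Polynomial

/-- The commuting graph of a group `G`: vertices are the non-central elements,
two distinct vertices are adjacent iff they commute. -/
def commutingGraph (G : Type*) [Group G] : SimpleGraph {x : G // x ∉ Subgroup.center G} where
  Adj x y := x ≠ y ∧ (x : G) * y = (y : G) * x
  symm := ⟨by rintro x y ⟨hne, hc⟩; exact ⟨hne.symm, hc.symm⟩⟩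
  loopless := ⟨by rintro x ⟨hne, _⟩; exact hne rfl⟩

open scoped Classical in
/-- The characteristic polynomial (over `ℝ`) of the adjacency matrix of the
commuting graph of `G`. -/
noncomputable def commCharpoly (G : Type*) [Group G] [Fintype G] : Polynomial ℝ :=
  ((commutingGraph G).adjMatrix ℝ).charpoly

/-! For odd `m` the centre of `D_{2m}` is trivial, all rotations commute with each other, a
nontrivial rotation commutes with no reflection and two distinct reflections never commute.
So `Γ_G` is the complete graph on the `m - 1` nontrivial rotations plus `m` isolated
reflections; its characteristic polynomial is the product of those of `K_{m-1}`, namely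
`(X + 1)^(m-2) (X - (m - 2))` (its adjacency matrix is `J - I` with `J` of rank one), and of
the empty graph, `X^m`. -/

namespace SimpleGraph
variable {V W R : Type*}

instance (G : SimpleGraph V) (H : SimpleGraph W) [DecidableRel G.Adj] [DecidableRel H.Adj] :
    DecidableRel (G ⊕g H).Adj
  | .inl _, .inl _ => decidable_of_iff _ sum_adj_inl.symm
  | .inr _, .inr _ => decidable_of_iff _ sum_adj_inr.symm
  | .inl _, .inr _ => isFalse (not_adj_sum_inl_inr _ _)
  | .inr _, .inl _ => isFalse fun h => not_adj_sum_inl_inr _ _ h.symm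

theorem adjMatrix_sum [Zero R] [One R] (G : SimpleGraph V) (H : SimpleGraph W)
    [DecidableRel G.Adj] [DecidableRel H.Adj] :
    (G ⊕g H).adjMatrix R = Matrix.fromBlocks (G.adjMatrix R) 0 0 (H.adjMatrix R) := by
  ext (v | w) (v' | w') <;> simp [adjMatrix_apply]

variable [Fintype V] [DecidableEq V] [Fintype W] [DecidableEq W] [CommRing R]

theorem Iso.charpoly_adjMatrix_eq {G : SimpleGraph V} {H : SimpleGraph W}
    [DecidableRel G.Adj] [DecidableRel H.Adj] (f : G ≃g H) :
    (G.adjMatrix R).charpoly = (H.adjMatrix R).charpoly := by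
  rw [← f.reindex_adjMatrix R, Matrix.charpoly_reindex]

theorem charpoly_adjMatrix_sum (G : SimpleGraph V) (H : SimpleGraph W) [DecidableRel G.Adj]
    [DecidableRel H.Adj] :
    ((G ⊕g H).adjMatrix R).charpoly = (G.adjMatrix R).charpoly * (H.adjMatrix R).charpoly := by
  rw [adjMatrix_sum, Matrix.charpoly_fromBlocks_zero₁₂]

theorem charpoly_adjMatrix_bot :
    ((⊥ : SimpleGraph V).adjMatrix R).charpoly = X ^ Fintype.card V := by
  rw [adjMatrix_bot, Matrix.charpoly_zero]

theorem charpoly_adjMatrix_completeGraph [Nonempty V] :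
    ((completeGraph V).adjMatrix R).charpoly =
      (X + 1) ^ (Fintype.card V - 1) * (X - C ((Fintype.card V : R) - 1)) := by
  obtain ⟨n, hn⟩ := Nat.exists_eq_succ_of_ne_zero (Fintype.card_ne_zero (α := V))
  have : (completeGraph V).adjMatrix R = Matrix.vecMulVec 1 1 - Matrix.scalar V (1 : R) := by
    rw [adjMatrix_completeGraph_eq_of_one_sub_one]
    ext i j
    simp [Matrix.one_apply]
  rw [this, Matrix.charpoly_sub_scalar, Matrix.charpoly_vecMulVec, hn]
  simp [pow_succ, hn, smul_eq_C_mul]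
  ring

end SimpleGraph

open SimpleGraph

namespace DihedralGroup
variable {n : ℕ}

theorem commute_r_r (i j : ZMod n) : Commute (r i) (r j) := by
  simp only [Commute, SemiconjBy, r_mul_r, add_comm]

theorem commute_r_sr_iff (hn : Odd n) {i j : ZMod n} : Commute (r i) (sr j) ↔ i = 0 := by
  rw [Commute, SemiconjBy, r_mul_sr, sr_mul_r, sr.injEq, sub_eq_add_neg, add_right_inj,
    neg_eq_iff_add_eq_zero, ZMod.add_self_eq_zero_iff_eq_zero hn]

theorem commute_sr_sr_iff (hn : Odd n) {i j : ZMod n} : Commute (sr i) (sr j) ↔ i = j := by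
  rw [Commute, SemiconjBy, sr_mul_sr, sr_mul_sr, r.injEq, ← neg_sub, neg_eq_iff_add_eq_zero,
    ZMod.add_self_eq_zero_iff_eq_zero hn, sub_eq_zero]

theorem not_mem_center_iff_ne_one (hn : Odd n) (hn1 : n ≠ 1) {x : DihedralGroup n} :
    x ∉ Subgroup.center (DihedralGroup n) ↔ x ≠ 1 := by
  rw [center_eq_bot_of_odd_ne_one hn hn1, Subgroup.mem_bot]

theorem r_ne_one_iff {i : ZMod n} : r i ≠ 1 ↔ i ≠ 0 := by
  rw [Ne, ← r_zero, r.injEq]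

def nonCentralEquivOfOdd (hn : Odd n) (hn1 : n ≠ 1) :
    {i : ZMod n // i ≠ 0} ⊕ ZMod n ≃
      {x : DihedralGroup n // x ∉ Subgroup.center (DihedralGroup n)} where
  toFun := Sum.elim (fun i => ⟨r i, (not_mem_center_iff_ne_one hn hn1).2 (r_ne_one_iff.2 i.2)⟩)
    (fun i => ⟨sr i, (not_mem_center_iff_ne_one hn hn1).2 (by rintro ⟨⟩)⟩)
  invFun
    | ⟨r i, h⟩ => .inl ⟨i, r_ne_one_iff.1 ((not_mem_center_iff_ne_one hn hn1).1 h)⟩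
    | ⟨sr i, _⟩ => .inr i
  left_inv := by rintro (_ | _) <;> rfl
  right_inv := by rintro ⟨_ | _, _⟩ <;> rfl

def commutingGraphIsoOfOdd (hn : Odd n) (hn1 : n ≠ 1) :
    completeGraph {i : ZMod n // i ≠ 0} ⊕g (⊥ : SimpleGraph (ZMod n)) ≃g
      commutingGraph (DihedralGroup n) where
  toEquiv := nonCentralEquivOfOdd hn hn1
  map_rel_iff' {a b} := by
    change _ ≠ _ ∧ Commute _ _ ↔ _
    rcases a with ⟨i, hi⟩ | i <;> rcases b with ⟨j, hj⟩ | j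
    · simp [nonCentralEquivOfOdd, commute_r_r]
    · simp [nonCentralEquivOfOdd, commute_r_sr_iff hn, hi]
    · simp [nonCentralEquivOfOdd, Commute.symm_iff.trans (commute_r_sr_iff hn), hj]
    · simp [nonCentralEquivOfOdd, commute_sr_sr_iff hn]

end DihedralGroup

/-- Trades the classical instances built into `commCharpoly` for arbitrary ones. -/
theorem commCharpoly_eq_charpoly_adjMatrix (G : Type*) [Group G] [Fintype G] [DecidableEq G]
    [Fintype {x : G // x ∉ Subgroup.center G}] [DecidableRel (commutingGraph G).Adj] :
    commCharpoly G = ((commutingGraph G).adjMatrix ℝ).charpoly := by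
  unfold commCharpoly
  congr!

theorem commuting_integral_dihedral_odd
    (m : ℕ) [NeZero m] (hm : 2 < m) (hmodd : Odd m) :
    commCharpoly (DihedralGroup m) =
        (X + 1) ^ (m - 2) * X ^ m * (X - C ((m : ℝ) - 2)) ∧
      ∀ μ : ℝ, (commCharpoly (DihedralGroup m)).IsRoot μ → ∃ k : ℤ, μ = (k : ℝ) := by
  classical
  have : Fact (1 < m) := ⟨by omega⟩
  have : Nonempty {i : ZMod m // i ≠ 0} := ⟨⟨1, one_ne_zero⟩⟩
  have hcard : Fintype.card {i : ZMod m // i ≠ 0} = m - 1 := by simp [ZMod.card]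
  have hcharpoly : commCharpoly (DihedralGroup m) =
      (X + 1) ^ (m - 2) * X ^ m * (X - C ((m : ℝ) - 2)) := by
    rw [commCharpoly_eq_charpoly_adjMatrix,
      ← (DihedralGroup.commutingGraphIsoOfOdd hmodd (by omega)).charpoly_adjMatrix_eq,
      charpoly_adjMatrix_sum, charpoly_adjMatrix_completeGraph, charpoly_adjMatrix_bot, hcard,
      ZMod.card, show m - 1 - 1 = m - 2 by omega, Nat.cast_sub (by omega : 1 ≤ m)]
    push_cast
    rw [sub_sub, one_add_one_eq_two, mul_right_comm]
  refine ⟨hcharpoly, fun μ hμ => ?_⟩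
  simp only [hcharpoly, IsRoot, eval_mul, eval_pow, eval_add, eval_X, eval_one, eval_sub, eval_C,
    mul_eq_zero, pow_eq_zero_iff', sub_eq_zero] at hμ
  rcases hμ with (⟨h, -⟩ | ⟨h, -⟩) | h
  · exact ⟨-1, by push_cast; linarith⟩
  · exact ⟨0, by simpa using h⟩
  · exact ⟨m - 2, by push_cast; linarith⟩
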